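/- If V : ℝ × ℝⁿ → ℝ is C¹ and solves the HJB equation -V_t(t,x) - H*(t, x, ∇ₓV(t,x)) = 0 with V(t_f, x) = F(x), where H*(t,x,λ) = min_u [L(t,x,u) + λᵀf(t,x,u)], then for any admissible control u(·) and corresponding trajectory x(·) with x(t₀) = x₀, the total cost satisfies F(x(t_f)) + ∫_{t₀}^{t_f} L(τ,x,u)dτ ≥ V(t₀, x₀). (Verification theorem: the HJB solution is a lower bound on achievable cost.) -/

import Mathlib

/-!
Along an admissible trajectory, the HJB equation and the minimality of `H*` give
`d/dt V(t, x(t)) = V_t + ∇ₓV ⬝ f(t, x, u) ≥ V_t + H*(t, x, ∇ₓV) - L(t, x, u) = -L(t, x, u)`,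
so `V(·, x(·))` decreases at rate at most `L`; integrating from `t₀` to `t_f` and using
`V(t_f, ·) = F` gives the bound.
-/

open Matrix intervalIntegral Set MeasureTheory

theorem le_add_integral_of_neg_deriv_le {g g' φ : ℝ → ℝ} {a b : ℝ} (hab : a ≤ b)
    (hg : ∀ t ∈ Icc a b, HasDerivAt g (g' t) t) (hφ : IntegrableOn φ (Icc a b))
    (hg'φ : ∀ t ∈ Ioo a b, -g' t ≤ φ t) :
    g a ≤ g b + ∫ t in a..b, φ t := by
  have hcont : ContinuousOn (fun t => -g t) (Icc a b) :=
    fun t ht => (hg t ht).continuousAt.neg.continuousWithinAt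
  have := sub_le_integral_of_hasDeriv_right_of_le hab hcont
    (fun t ht => (hg t (Ioo_subset_Icc_self ht)).neg.hasDerivWithinAt) hφ hg'φ
  linarith

theorem neg_le_cost_of_hjb {ι : Type*} {n : ℕ} {U : Set ι} (cost : ι → ℝ)
    (dyn : ι → Fin n → ℝ) (p : Fin n → ℝ) {vt H : ℝ}
    (hH : IsLeast ((fun v => cost v + p ⬝ᵥ dyn v) '' U) H) (hHJB : -vt - H = 0)
    {v : ι} (hv : v ∈ U) :
    -(vt + p ⬝ᵥ dyn v) ≤ cost v := by
  have := hH.2 ⟨v, hv, rfl⟩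
  linarith

theorem stmt_8_general {n m : ℕ} (t0 tf : ℝ) (ht : t0 ≤ tf)
    (U : Set (Fin m → ℝ))
    (L : ℝ → (Fin n → ℝ) → (Fin m → ℝ) → ℝ)
    (f : ℝ → (Fin n → ℝ) → (Fin m → ℝ) → (Fin n → ℝ))
    (hL : Continuous fun p : ℝ × (Fin n → ℝ) × (Fin m → ℝ) => L p.1 p.2.1 p.2.2)
    (F : (Fin n → ℝ) → ℝ)
    (V : ℝ → (Fin n → ℝ) → ℝ)
    (Vt : ℝ → (Fin n → ℝ) → ℝ) (Vx : ℝ → (Fin n → ℝ) → (Fin n → ℝ))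
    -- `V` is C¹ with partial derivatives `Vt`, `Vx`: chain rule along any C¹ curve
    (hchain : ∀ (y y' : ℝ → (Fin n → ℝ)) (t : ℝ), HasDerivAt y (y' t) t →
      HasDerivAt (fun s => V s (y s)) (Vt t (y t) + Vx t (y t) ⬝ᵥ y' t) t)
    -- the minimized Hamiltonian, attained over `U`
    (Hstar : ℝ → (Fin n → ℝ) → (Fin n → ℝ) → ℝ)
    (hHstar : ∀ t x lam, IsLeast ((fun u => L t x u + lam ⬝ᵥ f t x u) '' U)
      (Hstar t x lam))
    -- the HJB equation and the terminal condition
    (hHJB : ∀ t ∈ Set.Icc t0 tf, ∀ x, -Vt t x - Hstar t x (Vx t x) = 0)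
    (hterm : ∀ x, V tf x = F x)
    -- an admissible control and its trajectory
    (u : ℝ → (Fin m → ℝ)) (hu : Continuous u) (huU : ∀ t, u t ∈ U)
    (x : ℝ → (Fin n → ℝ)) (x0 : Fin n → ℝ) (hx0 : x t0 = x0)
    (hxdyn : ∀ t, HasDerivAt x (f t (x t) (u t)) t) :
    F (x tf) + (∫ τ in t0..tf, L τ (x τ) (u τ)) ≥ V t0 x0 := by
  have hx : Continuous x := continuous_iff_continuousAt.2 fun t => (hxdyn t).continuousAt
  have hcost : IntegrableOn (fun τ => L τ (x τ) (u τ)) (Icc t0 tf) :=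
    (hL.comp (continuous_id.prodMk (hx.prodMk hu))).integrableOn_Icc
  have hV := le_add_integral_of_neg_deriv_le ht
    (fun t _ => hchain x (fun s => f s (x s) (u s)) t (hxdyn t)) hcost
    fun t ht => neg_le_cost_of_hjb (L t (x t)) (f t (x t)) (Vx t (x t))
      (hHstar t (x t) (Vx t (x t))) (hHJB t (Ioo_subset_Icc_self ht) (x t)) (huU t)
  rwa [← hterm, ← hx0]

/-- Verification theorem: if `V` is C¹ (with partial derivatives `Vt`, `Vx`) and
solves the HJB equation `-V_t - H*(t,x,∇ₓV) = 0` with `V(t_f,·) = F`, where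
`H*(t,x,λ) = min_{u∈U} [L(t,x,u) + λᵀf(t,x,u)]` is attained, then for any admissible
control `u(·)` with trajectory `x(·)`, `x(t₀) = x₀`, the total cost satisfies
`F(x(t_f)) + ∫_{t₀}^{t_f} L dτ ≥ V(t₀,x₀)`. -/
theorem stmt_8 {n m : ℕ} (t0 tf : ℝ) (ht : t0 ≤ tf)
    (U : Set (Fin m → ℝ))
    (L : ℝ → (Fin n → ℝ) → (Fin m → ℝ) → ℝ)
    (f : ℝ → (Fin n → ℝ) → (Fin m → ℝ) → (Fin n → ℝ))
    (hL : Continuous fun p : ℝ × (Fin n → ℝ) × (Fin m → ℝ) => L p.1 p.2.1 p.2.2)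
    (hf : Continuous fun p : ℝ × (Fin n → ℝ) × (Fin m → ℝ) => f p.1 p.2.1 p.2.2)
    (F : (Fin n → ℝ) → ℝ)
    (V : ℝ → (Fin n → ℝ) → ℝ)
    (Vt : ℝ → (Fin n → ℝ) → ℝ) (Vx : ℝ → (Fin n → ℝ) → (Fin n → ℝ))
    (hVt : Continuous fun p : ℝ × (Fin n → ℝ) => Vt p.1 p.2)
    (hVx : Continuous fun p : ℝ × (Fin n → ℝ) => Vx p.1 p.2)
    -- `V` is C¹ with partial derivatives `Vt`, `Vx`: chain rule along any C¹ curve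
    (hchain : ∀ (y y' : ℝ → (Fin n → ℝ)) (t : ℝ), HasDerivAt y (y' t) t →
      HasDerivAt (fun s => V s (y s)) (Vt t (y t) + Vx t (y t) ⬝ᵥ y' t) t)
    -- the minimized Hamiltonian, attained over `U`
    (Hstar : ℝ → (Fin n → ℝ) → (Fin n → ℝ) → ℝ)
    (hHstar : ∀ t x lam, IsLeast ((fun u => L t x u + lam ⬝ᵥ f t x u) '' U)
      (Hstar t x lam))
    -- the HJB equation and the terminal condition
    (hHJB : ∀ t ∈ Set.Icc t0 tf, ∀ x, -Vt t x - Hstar t x (Vx t x) = 0)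
    (hterm : ∀ x, V tf x = F x)
    -- an admissible control and its trajectory
    (u : ℝ → (Fin m → ℝ)) (hu : Continuous u) (huU : ∀ t, u t ∈ U)
    (x : ℝ → (Fin n → ℝ)) (x0 : Fin n → ℝ) (hx0 : x t0 = x0)
    (hxdyn : ∀ t, HasDerivAt x (f t (x t) (u t)) t) :
    F (x tf) + (∫ τ in t0..tf, L τ (x τ) (u τ)) ≥ V t0 x0 :=
  stmt_8_general t0 tf ht U L f hL F V Vt Vx hchain Hstar hHstar hHJB hterm u hu huU x x0 hx0 hxdyn
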